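/- If a marked floor diagram (𝒟,m) of type (α,β,γ,δ) is r-real with r ≥ 1 and n = 2d−1+|α+β+2γ+2δ|, then the marked diagrams (𝒟, m) and (𝒟, ρ_{𝒟,m,r} ∘ m) have the same underlying floor diagram and the composition ρ_{𝒟,m,r} ∘ m is again a marking of 𝒟 of type (α,β,γ,δ). -/

import Mathlib

open scoped Classical

/-- `ℕ^∞`: finitely supported sequences of nonnegative integers. -/
abbrev Vec : Type := ℕ →₀ ℕ

/-- `|α| = Σᵢ (α)ᵢ`. -/
def vabs (a : Vec) : ℕ := a.sum fun _ v => v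

/-- `Iα = Σᵢ i·(α)ᵢ`. -/
def vI (a : Vec) : ℕ := a.sum fun i v => i * v

/-- Partial sum `Σ_{j=1}^{k} (α)_j`. -/
def psum (a : Vec) (k : ℕ) : ℕ := ∑ j ∈ Finset.Icc 1 k, a j

/-- `I^α = Πᵢ i^{(α)_i}` as a rational number. -/
def Iexp (a : Vec) : ℚ := ∏ i ∈ a.support, (i : ℚ) ^ a i

/-- A weighted oriented graph: a list of oriented edges with positive weights. -/
structure WGraph (V : Type) where
  edges : List (V × V)
  weight : Fin edges.length → ℕ
  weight_pos : ∀ i, 0 < weight i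

namespace WGraph

variable {V V' : Type} [Fintype V] [Fintype V']

def tail (G : WGraph V) (i : Fin G.edges.length) : V := (G.edges.get i).1

def head (G : WGraph V) (i : Fin G.edges.length) : V := (G.edges.get i).2

def Adj (G : WGraph V) (u v : V) : Prop :=
  ∃ i, (G.tail i = u ∧ G.head i = v) ∨ (G.tail i = v ∧ G.head i = u)

def Connected (G : WGraph V) : Prop := ∀ u v : V, Relation.ReflTransGen G.Adj u v

/-- A tree: connected with Euler characteristic `#V - #E = 1`. -/
def IsTree (G : WGraph V) : Prop := G.Connected ∧ Fintype.card V = G.edges.length + 1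

/-- A source: all adjacent edges are outgoing. -/
def IsSource (G : WGraph V) (v : V) : Prop := ∀ i, G.head i ≠ v

/-- Divergence: sum of incoming weights minus sum of outgoing weights. -/
noncomputable def div (G : WGraph V) (v : V) : ℤ :=
  (∑ i, if G.head i = v then (G.weight i : ℤ) else 0)
    - ∑ i, if G.tail i = v then (G.weight i : ℤ) else 0

/-- Floor diagram of genus 0 and degree `d`. -/
def IsFloorDiagram (G : WGraph V) (d : ℕ) : Prop :=
  G.IsTree ∧ (∀ v, ¬ G.IsSource v → G.div v = 1) ∧
  (∀ v, G.IsSource v → ∃! i, G.tail i = v) ∧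
  (∑ v : V, if G.IsSource v then G.div v else 0) = -(d : ℤ)

/-- Edge adjacent to a source (`Edge^∞`). -/
def IsInfEdge (G : WGraph V) (i : Fin G.edges.length) : Prop :=
  G.IsSource (G.tail i) ∨ G.IsSource (G.head i)

/-- Adjacency between elements (vertices or edges) of the graph. -/
def ElemAdj (G : WGraph V) : V ⊕ Fin G.edges.length → V ⊕ Fin G.edges.length → Prop
  | Sum.inl v, Sum.inr e => G.tail e = v ∨ G.head e = v
  | Sum.inr e, Sum.inl v => G.tail e = v ∨ G.head e = v
  | _, _ => False

/-- One step of the natural partial order on an oriented tree. -/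
def Step (G : WGraph V) : V ⊕ Fin G.edges.length → V ⊕ Fin G.edges.length → Prop
  | Sum.inr e, Sum.inl v => G.head e = v
  | Sum.inl v, Sum.inr e => G.tail e = v
  | _, _ => False

/-- The natural (strict) partial order "greater than" on elements of an oriented tree. -/
def ElemGT (G : WGraph V) : V ⊕ Fin G.edges.length → V ⊕ Fin G.edges.length → Prop :=
  Relation.TransGen G.Step

end WGraph

/-- `n = 2d - 1 + |α+β+2γ+2δ|` where `d = Iα+Iβ+2Iγ+2Iδ`. -/
noncomputable def mn (α β γ δ : Vec) : ℕ :=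
  2 * (vI α + vI β + 2 * vI γ + 2 * vI δ) - 1 + vabs (α + β + 2 • γ + 2 • δ)

namespace WGraph

variable {V V' : Type} [Fintype V] [Fintype V']

/-- A marking of type `(α,β,γ,δ)` of a floor diagram, with marked points indexed by
`1,…,n`. -/
structure IsMarking (G : WGraph V) (α β γ δ : Vec)
    (m : ℕ → V ⊕ Fin G.edges.length) : Prop where
  floor : G.IsFloorDiagram (vI α + vI β + 2 * vI γ + 2 * vI δ)
  inj : Set.InjOn m (Set.Icc 1 (mn α β γ δ))
  mono : ∀ i ∈ Set.Icc 1 (mn α β γ δ), ∀ j ∈ Set.Icc 1 (mn α β γ δ),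
      G.ElemGT (m i) (m j) → j < i
  srcA : ∀ k, 1 ≤ k → ∀ i, psum α (k-1) + 1 ≤ i → i ≤ psum α k →
      ∃ v, m i = Sum.inl v ∧ G.IsSource v ∧ G.div v = -(k : ℤ)
  srcG : ∀ k, 1 ≤ k → ∀ i, vabs α + 2 * psum γ (k-1) + 1 ≤ i →
      i ≤ vabs α + 2 * psum γ k →
      ∃ v, m i = Sum.inl v ∧ G.IsSource v ∧ G.div v = -(k : ℤ)
  edgeCount : ∀ k, 1 ≤ k →
      {e : Fin G.edges.length | G.IsInfEdge e ∧ G.weight e = k ∧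
        ∃ i ∈ Set.Icc 1 (mn α β γ δ), m i = Sum.inr e}.ncard = β k + 2 * δ k
  srcEdge : ∀ v, G.IsSource v → ∀ e, (G.tail e = v ∨ G.head e = v) →
      Xor' (∃ i ∈ Set.Icc 1 (mn α β γ δ), m i = Sum.inl v)
           (∃ i ∈ Set.Icc 1 (mn α β γ δ), m i = Sum.inr e)

/-- `{i, i+1}` is an `r`-pair. -/
def IsRPair (α γ : Vec) (n r i : ℕ) : Prop :=
  (∃ k, 1 ≤ k ∧ k ≤ vabs γ ∧ i = vabs α + 2 * k - 1) ∨
  (∃ k, 1 ≤ k ∧ k ≤ r ∧ i = n - 2 * k + 1)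

/-- Membership in `Im(𝒟,m,r)`. -/
def InIm (G : WGraph V) (α γ : Vec) (r n : ℕ)
    (m : ℕ → V ⊕ Fin G.edges.length) (a : V ⊕ Fin G.edges.length) : Prop :=
  ∃ i, IsRPair α γ n r i ∧ ¬ G.ElemAdj (m i) (m (i+1)) ∧ (a = m i ∨ a = m (i+1))

/-- The involution `ρ_{𝒟,m,r}`. -/
noncomputable def rho (G : WGraph V) (α γ : Vec) (r n : ℕ)
    (m : ℕ → V ⊕ Fin G.edges.length) (a : V ⊕ Fin G.edges.length) :
    V ⊕ Fin G.edges.length :=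
  if h : InIm G α γ r n m a then
    (if a = m (Classical.choose h) then m (Classical.choose h + 1)
     else m (Classical.choose h))
  else a

/-- Equivalence of marked (weighted, oriented) graphs. -/
def MEquiv (G : WGraph V) (m : ℕ → V ⊕ Fin G.edges.length)
    (G' : WGraph V') (m' : ℕ → V' ⊕ Fin G'.edges.length) (n : ℕ) : Prop :=
  ∃ (φ : V ≃ V') (σ : Fin G.edges.length ≃ Fin G'.edges.length),
    (∀ e, G'.tail (σ e) = φ (G.tail e)) ∧ (∀ e, G'.head (σ e) = φ (G.head e)) ∧
    (∀ e, G'.weight (σ e) = G.weight e) ∧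
    ∀ i ∈ Set.Icc 1 n, m' i = Sum.map φ σ (m i)

/-- Isomorphism of weighted oriented graphs (forgetting markings). -/
def GEquiv (G : WGraph V) (G' : WGraph V') : Prop :=
  ∃ (φ : V ≃ V') (σ : Fin G.edges.length ≃ Fin G'.edges.length),
    (∀ e, G'.tail (σ e) = φ (G.tail e)) ∧ (∀ e, G'.head (σ e) = φ (G.head e)) ∧
    (∀ e, G'.weight (σ e) = G.weight e)

/-- `(𝒟,m)` is `r`-real. -/
def IsRReal (G : WGraph V) (α β γ δ : Vec) (r : ℕ)
    (m : ℕ → V ⊕ Fin G.edges.length) : Prop :=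
  MEquiv G m G (fun i => rho G α γ r (mn α β γ δ) m (m i)) (mn α β γ δ) ∧
  ∀ k, 1 ≤ k → {e : Fin G.edges.length | G.IsInfEdge e ∧ G.weight e = k ∧
      InIm G α γ r (mn α β γ δ) m (Sum.inr e)}.ncard = 2 * δ k

/-- Complex multiplicity `μ^ℂ`. -/
noncomputable def muC (G : WGraph V) (α β γ δ : Vec) : ℚ :=
  (Iexp (2 • α + β + 4 • γ + 2 • δ))⁻¹ * ∏ e, (G.weight e : ℚ) ^ 2

/-- `r`-real multiplicity `μ^ℝ_r`. -/
noncomputable def muR (G : WGraph V) (α β γ δ : Vec) (r : ℕ)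
    (m : ℕ → V ⊕ Fin G.edges.length) : ℚ :=
  if IsRReal G α β γ δ r m ∧
      (∀ e, 2 ∣ G.weight e → InIm G α γ r (mn α β γ δ) m (Sum.inr e)) then
    (-1 : ℚ) ^ (({v : V | ¬ G.IsSource v ∧
        InIm G α γ r (mn α β γ δ) m (Sum.inl v)}.ncard) / 2)
      * (Iexp δ)⁻¹
      * ∏ e ∈ Finset.univ.filter
          (fun e => ¬ ∃ i ∈ Set.Icc 1 (mn α β γ δ - 2 * r), m i = Sum.inr e),
          (G.weight e : ℚ)
  else 0

end WGraph

/-- A bundled marked floor diagram of type `(α,β,γ,δ)`. -/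
structure BMFD (α β γ δ : Vec) : Type 1 where
  V : Type
  [fV : Fintype V]
  G : WGraph V
  m : ℕ → V ⊕ Fin G.edges.length
  marking : G.IsMarking α β γ δ m

attribute [instance] BMFD.fV

/-- Equivalence of bundled marked floor diagrams. -/
def BMFD.Equiv {α β γ δ : Vec} (X Y : BMFD α β γ δ) : Prop :=
  WGraph.MEquiv X.G X.m Y.G Y.m (mn α β γ δ)

noncomputable def BMFD.muC' {α β γ δ : Vec} (X : BMFD α β γ δ) : ℚ :=
  WGraph.muC X.G α β γ δ

noncomputable def BMFD.muR' {α β γ δ : Vec} (X : BMFD α β γ δ) (r : ℕ) : ℚ :=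
  WGraph.muR X.G α β γ δ r X.m

/-! The equivalence of marked graphs required by `r`-reality is an isomorphism of weighted
oriented graphs carrying `m` to `ρ ∘ m` on the marked points `1, …, n`, and every condition in
the definition of a marking of type `(α,β,γ,δ)` is invariant under transport along such an
isomorphism. -/

namespace WGraph

variable {V V' : Type} {G : WGraph V} {G' : WGraph V'}

structure Iso (G : WGraph V) (G' : WGraph V') where
  vert : V ≃ V'
  edge : Fin G.edges.length ≃ Fin G'.edges.length
  tail_edge : ∀ e, G'.tail (edge e) = vert (G.tail e)
  head_edge : ∀ e, G'.head (edge e) = vert (G.head e)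
  weight_edge : ∀ e, G'.weight (edge e) = G.weight e

namespace Iso

def elem (f : Iso G G') : V ⊕ Fin G.edges.length ≃ V' ⊕ Fin G'.edges.length :=
  Equiv.sumCongr f.vert f.edge

@[simp] lemma elem_inl (f : Iso G G') (v : V) : f.elem (Sum.inl v) = Sum.inl (f.vert v) := rfl

@[simp] lemma elem_inr (f : Iso G G') (e : Fin G.edges.length) :
    f.elem (Sum.inr e) = Sum.inr (f.edge e) := rfl

def symm (f : Iso G G') : Iso G' G where
  vert := f.vert.symm
  edge := f.edge.symm
  tail_edge e := by rw [f.vert.eq_symm_apply, ← f.tail_edge, f.edge.apply_symm_apply]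
  head_edge e := by rw [f.vert.eq_symm_apply, ← f.head_edge, f.edge.apply_symm_apply]
  weight_edge e := by rw [← f.weight_edge, f.edge.apply_symm_apply]

@[simp] lemma symm_vert (f : Iso G G') : f.symm.vert = f.vert.symm := rfl

@[simp] lemma symm_elem (f : Iso G G') : f.symm.elem = f.elem.symm := rfl

lemma adj_map (f : Iso G G') {u v : V} (h : G.Adj u v) : G'.Adj (f.vert u) (f.vert v) := by
  obtain ⟨e, he⟩ := h
  exact ⟨f.edge e, by simpa only [f.tail_edge, f.head_edge, f.vert.apply_eq_iff_eq] using he⟩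

lemma connected (f : Iso G G') (h : G.Connected) : G'.Connected := by
  intro u v
  simpa only [Function.onFun, Equiv.apply_symm_apply] using
    Relation.ReflTransGen.lift f.vert (fun _ _ => f.adj_map) _ _
      (h (f.vert.symm u) (f.vert.symm v))

lemma isTree (f : Iso G G') [Fintype V] [Fintype V'] (h : G.IsTree) : G'.IsTree :=
  ⟨f.connected h.1, by
    rw [← Fintype.card_congr f.vert, h.2, Fin.equiv_iff_eq.mp ⟨f.edge⟩]⟩

lemma isSource_map (f : Iso G G') {v : V} (h : G.IsSource v) : G'.IsSource (f.vert v) := by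
  intro e he
  apply h (f.edge.symm e)
  rw [← f.vert.apply_eq_iff_eq, ← f.head_edge, f.edge.apply_symm_apply, he]

lemma isSource_map_iff (f : Iso G G') {v : V} : G'.IsSource (f.vert v) ↔ G.IsSource v :=
  ⟨fun h => by simpa using f.symm.isSource_map h, f.isSource_map⟩

lemma div_map (f : Iso G G') (v : V) : G'.div (f.vert v) = G.div v := by
  unfold div
  simp only [← f.edge.sum_comp, f.tail_edge, f.head_edge, f.weight_edge,
    f.vert.apply_eq_iff_eq]

lemma isFloorDiagram (f : Iso G G') [Fintype V] [Fintype V'] {d : ℕ}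
    (h : G.IsFloorDiagram d) : G'.IsFloorDiagram d := by
  obtain ⟨htree, hdiv, hsrc, hsum⟩ := h
  refine ⟨f.isTree htree, f.vert.surjective.forall.2 fun v hv => ?_,
    f.vert.surjective.forall.2 fun v hv => ?_, ?_⟩
  · rw [f.div_map]
    exact hdiv v (mt f.isSource_map hv)
  · obtain ⟨e, he, huniq⟩ := hsrc v (f.isSource_map_iff.1 hv)
    refine ⟨f.edge e, by simp only [f.tail_edge, he],
      f.edge.surjective.forall.2 fun e' he' => ?_⟩
    simp only [f.tail_edge, f.vert.apply_eq_iff_eq] at he'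
    rw [huniq e' he']
  · rw [← hsum, ← f.vert.sum_comp]
    simp only [f.isSource_map_iff, f.div_map]

lemma step_map (f : Iso G G') {a b : V ⊕ Fin G.edges.length} (h : G.Step a b) :
    G'.Step (f.elem a) (f.elem b) := by
  rcases a with v | e <;> rcases b with w | e' <;>
    simp_all [Step, f.tail_edge, f.head_edge]

lemma elemGT_map (f : Iso G G') {a b : V ⊕ Fin G.edges.length} (h : G.ElemGT a b) :
    G'.ElemGT (f.elem a) (f.elem b) :=
  Relation.TransGen.lift f.elem (fun _ _ => f.step_map) _ _ h

lemma elemGT_map_iff (f : Iso G G') {a b : V ⊕ Fin G.edges.length} :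
    G'.ElemGT (f.elem a) (f.elem b) ↔ G.ElemGT a b :=
  ⟨fun h => by simpa using f.symm.elemGT_map h, f.elemGT_map⟩

lemma isInfEdge_map_iff (f : Iso G G') {e : Fin G.edges.length} :
    G'.IsInfEdge (f.edge e) ↔ G.IsInfEdge e := by
  simp only [IsInfEdge, f.tail_edge, f.head_edge, f.isSource_map_iff]

end Iso

lemma MEquiv.exists_iso {m : ℕ → V ⊕ Fin G.edges.length}
    {m' : ℕ → V' ⊕ Fin G'.edges.length} {n : ℕ} (h : MEquiv G m G' m' n) :
    ∃ f : Iso G G', ∀ i ∈ Set.Icc 1 n, m' i = f.elem (m i) := by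
  obtain ⟨φ, σ, ht, hh, hw, hm⟩ := h
  exact ⟨⟨φ, σ, ht, hh, hw⟩, hm⟩

end WGraph

lemma vabs_add (a b : Vec) : vabs (a + b) = vabs a + vabs b :=
  Finsupp.sum_add_index' (fun _ => rfl) (fun _ _ _ => rfl)

lemma vabs_two_smul (a : Vec) : vabs (2 • a) = 2 * vabs a := by
  rw [two_smul, vabs_add, two_mul]

lemma psum_le_vabs (a : Vec) (k : ℕ) : psum a k ≤ vabs a :=
  Finset.sum_le_sum_of_ne_zero fun _ _ hj => Finsupp.mem_support_iff.mpr hj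

lemma vabs_add_two_mul_vabs_le_mn (α β γ δ : Vec) :
    vabs α + 2 * vabs γ ≤ mn α β γ δ := by
  rw [mn, vabs_add, vabs_add, vabs_add, vabs_two_smul, vabs_two_smul]
  omega

namespace WGraph

variable {V V' : Type} [Fintype V] [Fintype V'] {G : WGraph V} {G' : WGraph V'}
  {α β γ δ : Vec} {m : ℕ → V ⊕ Fin G.edges.length}
  {m' : ℕ → V' ⊕ Fin G'.edges.length}

lemma IsMarking.map (hm : G.IsMarking α β γ δ m) (f : Iso G G')
    (hm' : ∀ i ∈ Set.Icc 1 (mn α β γ δ), m' i = f.elem (m i)) :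
    G'.IsMarking α β γ δ m' := by
  have marked_iff (x) : (∃ i ∈ Set.Icc 1 (mn α β γ δ), m' i = f.elem x) ↔
      ∃ i ∈ Set.Icc 1 (mn α β γ δ), m i = x := by
    refine exists_congr fun i => and_congr_right fun hi => ?_
    rw [hm' i hi, f.elem.apply_eq_iff_eq]
  have source_map (i k : ℕ) (hi : i ∈ Set.Icc 1 (mn α β γ δ))
      (h : ∃ v, m i = Sum.inl v ∧ G.IsSource v ∧ G.div v = -(k : ℤ)) :
      ∃ v, m' i = Sum.inl v ∧ G'.IsSource v ∧ G'.div v = -(k : ℤ) := by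
    obtain ⟨v, hv, hsrc, hdiv⟩ := h
    exact ⟨f.vert v, by rw [hm' i hi, hv, f.elem_inl], f.isSource_map hsrc,
      by rw [f.div_map, hdiv]⟩
  have hmn := vabs_add_two_mul_vabs_le_mn α β γ δ
  refine ⟨f.isFloorDiagram hm.floor, ?_, ?_, ?_, ?_, ?_, ?_⟩
  · intro i hi j hj hij
    rw [hm' i hi, hm' j hj] at hij
    exact hm.inj hi hj (f.elem.injective hij)
  · intro i hi j hj hij
    rw [hm' i hi, hm' j hj, f.elemGT_map_iff] at hij
    exact hm.mono i hi j hj hij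
  · intro k hk i h1 h2
    have := psum_le_vabs α k
    exact source_map i k ⟨by omega, by omega⟩ (hm.srcA k hk i h1 h2)
  · intro k hk i h1 h2
    have := psum_le_vabs γ k
    exact source_map i k ⟨by omega, by omega⟩ (hm.srcG k hk i h1 h2)
  · intro k hk
    rw [← hm.edgeCount k hk, ← Set.ncard_image_of_injective _ f.edge.injective]
    congr 1
    ext e'
    obtain ⟨e, rfl⟩ := f.edge.surjective e'
    simp only [Set.mem_ofPred_eq, f.edge.injective.mem_set_image, f.isInfEdge_map_iff,
      f.weight_edge, ← f.elem_inr, marked_iff]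
  · refine f.vert.surjective.forall.2 fun v hv => f.edge.surjective.forall.2 fun e he => ?_
    rw [f.tail_edge, f.head_edge, f.vert.apply_eq_iff_eq, f.vert.apply_eq_iff_eq] at he
    rw [← f.elem_inl, ← f.elem_inr, marked_iff, marked_iff]
    exact hm.srcEdge v (f.isSource_map_iff.1 hv) e he

end WGraph

theorem stmt14_general {V : Type} [Fintype V] (G : WGraph V) (α β γ δ : Vec) (r : ℕ)
    (m : ℕ → V ⊕ Fin G.edges.length)
    (hm : G.IsMarking α β γ δ m)
    (hrr : G.IsRReal α β γ δ r m) :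
    G.IsMarking α β γ δ (fun i => WGraph.rho G α γ r (mn α β γ δ) m (m i)) := by
  obtain ⟨f, hf⟩ := hrr.1.exists_iso
  exact hm.map f hf

/-- If a marked floor diagram `(𝒟,m)` of type `(α,β,γ,δ)` is `r`-real with `r ≥ 1`,
then (on the same underlying floor diagram `𝒟`) the composition `ρ_{𝒟,m,r} ∘ m` is
again a marking of `𝒟` of type `(α,β,γ,δ)`. -/
theorem stmt14 {V : Type} [Fintype V] (G : WGraph V) (α β γ δ : Vec) (r : ℕ)
    (m : ℕ → V ⊕ Fin G.edges.length)
    (hm : G.IsMarking α β γ δ m)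
    (hrr : G.IsRReal α β γ δ r m)
    (hr1 : 1 ≤ r)
    (hr : 2 * r ≤ 2 * (vI α + vI β + 2 * vI γ + 2 * vI δ) - 1 + vabs (β + 2 • δ)) :
    G.IsMarking α β γ δ (fun i => WGraph.rho G α γ r (mn α β γ δ) m (m i)) :=
  stmt14_general G α β γ δ r m hm hrr
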